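/- arXiv:math/0201140 — 3 statements merged into one kernel-verified Lean document; each statement's English description precedes it below -/
import Mathlib

section
/- For every n ≥ 3, the following identity of polynomials in t holds (this is the paper's recurrence D_n(t) = [(2n-1)t+1]D_{n-1}(t) + 2t(1-t)D_{n-1}'(t) + (1-t)[t^{-1}D_{n-1}^{0,1}(t) - t·D_{n-1}^{≥2}(t)], cleared of the denominator t, which is legitimate since t divides D_{n-1}^{0,1}(t)): t·D_n(t) = [(2n-1)t + 1]·t·D_{n-1}(t) + 2t²(1-t)·D_{n-1}'(t) + (1-t)·[D_{n-1}^{0,1}(t) - t²·D_{n-1}^{≥2}(t)], where ′ denotes the formal derivative of polynomials. -/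
/-- A signed permutation of `{1,…,n}`, encoded as an (unsigned) permutation of
`Fin n` together with a choice of sign for each position.  The associated
word is `π_1 π_2 ⋯ π_n` where `π_j = ± σ(j)`. -/
abbrev SignedPerm (n : ℕ) := Equiv.Perm (Fin n) × (Fin n → Bool)

namespace SignedPerm

/-- The letter `π_j` of the word of `p`, for `1 ≤ j ≤ n` (and `0` otherwise). -/
def word {n : ℕ} (p : SignedPerm n) (j : ℕ) : ℤ :=
  if h : 1 ≤ j ∧ j ≤ n then
    (if p.2 ⟨j - 1, by omega⟩ then -1 else 1) * ((p.1 ⟨j - 1, by omega⟩ : ℕ) + 1)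
  else 0

/-- The letter `π_j`, with the type `D` convention `π_0 = -π_2`. -/
def entry {n : ℕ} (p : SignedPerm n) (j : ℕ) : ℤ :=
  if j = 0 then -(p.word 2) else p.word j

/-- The set of `D`-descents of `p`: those `i ∈ {0,…,n-1}` with `π_i > π_{i+1}`. -/
def ddes {n : ℕ} (p : SignedPerm n) : Finset ℕ :=
  (Finset.range n).filter fun i => p.entry (i + 1) < p.entry i

/-- The number of `D`-descents of `p`. -/
def d {n : ℕ} (p : SignedPerm n) : ℕ := p.ddes.card

/-- Membership in the type `D` Coxeter group `D_n ⊆ B_n`: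
the number of negative letters is even. -/
def inD {n : ℕ} (p : SignedPerm n) : Prop :=
  Even (Finset.univ.filter (fun i => p.2 i = true)).card

/-- Type '1': descent at position `1` but not at `0`. -/
def type1 {n : ℕ} (p : SignedPerm n) : Prop := 1 ∈ p.ddes ∧ 0 ∉ p.ddes

/-- Type '0,1': descents at both positions `0` and `1`. -/
def type01 {n : ℕ} (p : SignedPerm n) : Prop := 0 ∈ p.ddes ∧ 1 ∈ p.ddes

/-- Type '≥2': no descent at positions `0` and `1`. -/
def typeGe2 {n : ℕ} (p : SignedPerm n) : Prop := 0 ∉ p.ddes ∧ 1 ∉ p.ddes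

/-- Type '0,≥2': descent at position `0` but not at `1`. -/
def type0Ge2 {n : ℕ} (p : SignedPerm n) : Prop := 0 ∈ p.ddes ∧ 1 ∉ p.ddes

instance {n : ℕ} (p : SignedPerm n) : Decidable p.inD := by
  unfold SignedPerm.inD; infer_instance
instance {n : ℕ} (p : SignedPerm n) : Decidable p.type1 := by
  unfold SignedPerm.type1; infer_instance
instance {n : ℕ} (p : SignedPerm n) : Decidable p.type01 := by
  unfold SignedPerm.type01; infer_instance
instance {n : ℕ} (p : SignedPerm n) : Decidable p.typeGe2 := by
  unfold SignedPerm.typeGe2; infer_instance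
instance {n : ℕ} (p : SignedPerm n) : Decidable p.type0Ge2 := by
  unfold SignedPerm.type0Ge2; infer_instance

end SignedPerm

/-- The type `D` Eulerian number `D_{n,k}`: the number of elements of `D_n`
with exactly `k` `D`-descents (zero for `k < 0`). -/
def eulerD (n : ℕ) (k : ℤ) : ℕ :=
  (Finset.univ.filter fun p : SignedPerm n => p.inD ∧ (p.d : ℤ) = k).card

/-- The sub-Eulerian number `D_{n,k}^1`. -/
def subEuler1 (n : ℕ) (k : ℤ) : ℕ :=
  (Finset.univ.filter fun p : SignedPerm n => p.inD ∧ p.type1 ∧ (p.d : ℤ) = k).card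

/-- The sub-Eulerian number `D_{n,k}^{0,1}`. -/
def subEuler01 (n : ℕ) (k : ℤ) : ℕ :=
  (Finset.univ.filter fun p : SignedPerm n => p.inD ∧ p.type01 ∧ (p.d : ℤ) = k).card

/-- The sub-Eulerian number `D_{n,k}^{≥2}`. -/
def subEulerGe2 (n : ℕ) (k : ℤ) : ℕ :=
  (Finset.univ.filter fun p : SignedPerm n => p.inD ∧ p.typeGe2 ∧ (p.d : ℤ) = k).card

/-- The sub-Eulerian number `D_{n,k}^{0,≥2}`. -/
def subEuler0Ge2 (n : ℕ) (k : ℤ) : ℕ :=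
  (Finset.univ.filter fun p : SignedPerm n => p.inD ∧ p.type0Ge2 ∧ (p.d : ℤ) = k).card

/-- The type `D` Eulerian polynomial `D_n(t) = Σ_{π ∈ D_n} t^{d(π)}`
(with `D_0(t) = D_1(t) = 1`). -/
noncomputable def polyD (n : ℕ) : Polynomial ℚ :=
  ∑ p ∈ Finset.univ.filter (fun p : SignedPerm n => p.inD), Polynomial.X ^ p.d

/-- The sub-Eulerian polynomial `D_n^1(t)`. -/
noncomputable def polyD1 (n : ℕ) : Polynomial ℚ :=
  ∑ p ∈ Finset.univ.filter (fun p : SignedPerm n => p.inD ∧ p.type1), Polynomial.X ^ p.d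

/-- The sub-Eulerian polynomial `D_n^{0,1}(t)`. -/
noncomputable def polyD01 (n : ℕ) : Polynomial ℚ :=
  ∑ p ∈ Finset.univ.filter (fun p : SignedPerm n => p.inD ∧ p.type01), Polynomial.X ^ p.d

/-- The sub-Eulerian polynomial `D_n^{≥2}(t)`. -/
noncomputable def polyDGe2 (n : ℕ) : Polynomial ℚ :=
  ∑ p ∈ Finset.univ.filter (fun p : SignedPerm n => p.inD ∧ p.typeGe2), Polynomial.X ^ p.d

/-- The sub-Eulerian polynomial `D_n^{0,≥2}(t)`. -/
noncomputable def polyD0Ge2 (n : ℕ) : Polynomial ℚ :=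
  ∑ p ∈ Finset.univ.filter (fun p : SignedPerm n => p.inD ∧ p.type0Ge2), Polynomial.X ^ p.d

/-!
Deleting the letter `±n` from `τ ∈ D_n` (and, if it was negative, negating the first remaining
letter, which restores an even number of negative letters) identifies `D_n` with
`D_{n-1} × {±} × {0, …, n-1}`, the last factor being the number `s` of letters before `±n`.
Inserting `±n` into slot `s` of `π ∈ D_{n-1}`
* for `2 ≤ s ≤ n - 2` adds a descent unless `s` is a descent of `π`, whatever the sign;
* for `s = n - 1` adds a descent exactly when the sign is negative;
* for `s ∈ {0, 1}` changes the descent number by an amount depending only on which of `0, 1`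
  are descents of `π`; this is where `D^{0,1}` and `D^{≥2}` come from.
Summing `t^d` over the `2n` insertions into a fixed `π` gives the summand of the right-hand
side belonging to `π`.
-/

open Finset Polynomial

lemma Polynomial.X_mul_derivative_X_pow {R : Type*} [CommSemiring R] (n : ℕ) :
    X * derivative (X ^ n : R[X]) = (n : R[X]) * X ^ n := by
  cases n with
  | zero => simp
  | succ n => rw [derivative_X_pow, C_eq_natCast, Nat.add_sub_cancel]; ring

namespace SignedPerm

section Descents

variable {n : ℕ} (p : SignedPerm n)

def desInd (i : ℕ) : ℕ := if p.entry (i + 1) < p.entry i then 1 else 0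

lemma d_eq_sum_desInd : p.d = ∑ i ∈ range n, p.desInd i := by
  rw [d, ddes, card_filter]; rfl

lemma desInd_eq_ite_mem {i : ℕ} (hi : i < n) : p.desInd i = if i ∈ p.ddes then 1 else 0 := by
  simp [desInd, ddes, hi]

lemma desInd_zero : p.desInd 0 = if p.word 1 < -p.word 2 then 1 else 0 := by
  simp [desInd, entry]

lemma desInd_of_pos {i : ℕ} (hi : 0 < i) :
    p.desInd i = if p.word (i + 1) < p.word i then 1 else 0 := by
  simp [desInd, entry, hi.ne']

lemma desInd_one : p.desInd 1 = if p.word 2 < p.word 1 then 1 else 0 :=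
  desInd_of_pos p one_pos

lemma d_eq_card_add_desInd (hn : 2 ≤ n) :
    p.d = #{j ∈ Ico 2 n | j ∈ p.ddes} + p.desInd 0 + p.desInd 1 := by
  have hk : #{j ∈ Ico 2 n | j ∈ p.ddes} = ∑ j ∈ Ico 2 n, p.desInd j := by
    rw [card_filter]
    exact sum_congr rfl fun j hj => (desInd_eq_ite_mem p (mem_Ico.1 hj).2).symm
  rw [d_eq_sum_desInd, ← sum_range_add_sum_Ico _ hn, hk]
  simp only [sum_range_succ, sum_range_zero]
  ring

lemma word_le (j : ℕ) : p.word j ≤ n := by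
  unfold word; split
  · have := (p.1 ⟨j - 1, by omega⟩).isLt
    split <;> omega
  · positivity

lemma neg_le_word (j : ℕ) : -(n : ℤ) ≤ p.word j := by
  unfold word; split
  · have := (p.1 ⟨j - 1, by omega⟩).isLt
    split <;> omega
  · simp

lemma word_val_add_one (v : Fin n) :
    p.word (v + 1) = (if p.2 v then -1 else 1) * ((p.1 v : ℕ) + 1) := by
  rw [word, dif_pos ⟨by omega, v.isLt⟩]; rfl

end Descents

section Insert

variable {L : ℕ}

lemma bijective_insertNth_last (σ : Equiv.Perm (Fin L)) (s : Fin (L + 1)) :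
    Function.Bijective
      (s.insertNth (α := fun _ => Fin (L + 1)) (Fin.last L) (Fin.castSucc ∘ σ)) := by
  rw [Fintype.bijective_iff_surjective_and_card]
  refine ⟨fun v => ?_, rfl⟩
  rcases eq_or_ne v (Fin.last L) with rfl | hv
  · exact ⟨s, Fin.insertNth_apply_same ..⟩
  · obtain ⟨u, rfl⟩ := Fin.exists_castSucc_eq.mpr hv
    exact ⟨s.succAbove (σ.symm u), by simp [Fin.insertNth_apply_succAbove]⟩

/-- Inserts `-(L + 2)` if `ε`, else `L + 2`, after the first `s` letters; a negative insertion
also negates the first old letter. -/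
noncomputable def ins (p : SignedPerm (L + 1)) (ε : Bool) (s : Fin (L + 2)) : SignedPerm (L + 2) :=
  (Equiv.ofBijective _ (bijective_insertNth_last p.1 s),
    s.insertNth ε (Function.update p.2 0 (xor ε (p.2 0))))

variable (p : SignedPerm (L + 1)) (ε : Bool) (s : Fin (L + 2))

@[simp] lemma ins_fst_self : (ins p ε s).1 s = Fin.last (L + 1) := by
  simp [ins]

@[simp] lemma ins_snd_self : (ins p ε s).2 s = ε := by
  simp [ins]

@[simp] lemma ins_fst_succAbove (i : Fin (L + 1)) :
    (ins p ε s).1 (s.succAbove i) = (p.1 i).castSucc := by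
  simp [ins]

@[simp] lemma ins_snd_succAbove (i : Fin (L + 1)) :
    (ins p ε s).2 (s.succAbove i) = Function.update p.2 0 (xor ε (p.2 0)) i :=
  Fin.insertNth_apply_succAbove (α := fun _ => Bool) ..

lemma word_ins_self : (ins p ε s).word (s + 1) = (if ε then -1 else 1) * (L + 2) := by
  rw [word_val_add_one, ins_fst_self, ins_snd_self, Fin.val_last]
  push_cast
  split <;> ring

lemma word_ins_succAbove (i : Fin (L + 1)) :
    (ins p ε s).word (s.succAbove i + 1) = (if ε ∧ i = 0 then -1 else 1) * p.word (i + 1) := by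
  rw [word_val_add_one, word_val_add_one, ins_fst_succAbove, ins_snd_succAbove]
  rcases eq_or_ne i 0 with rfl | hi
  · cases ε <;> cases p.2 0 <;> simp
  · simp [hi]

lemma word_ins_of_le {j : ℕ} (hj : 1 ≤ j) (hjs : j ≤ s) :
    (ins p ε s).word j = (if ε ∧ j = 1 then -1 else 1) * p.word j := by
  have h := word_ins_succAbove p ε s ⟨j - 1, by omega⟩
  rw [Fin.succAbove_of_castSucc_lt _ _ (by simp only [Fin.castSucc_mk, Fin.lt_def]; omega)] at h
  simpa [Fin.ext_iff, Nat.sub_add_cancel hj, Nat.sub_eq_iff_eq_add hj] using h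

lemma word_ins_of_ge {j : ℕ} (hsj : s + 2 ≤ j) (hj : j ≤ L + 2) :
    (ins p ε s).word j = (if ε ∧ j = 2 then -1 else 1) * p.word (j - 1) := by
  have h := word_ins_succAbove p ε s ⟨j - 2, by omega⟩
  rw [Fin.succAbove_of_le_castSucc _ _ (by simp only [Fin.castSucc_mk, Fin.le_def]; omega)] at h
  simpa [Fin.ext_iff, show j - 2 + 1 = j - 1 by omega, show j - 1 + 1 = j by omega,
    show j - 2 = 0 ↔ j = 2 by omega] using h

end Insert

section InsertDescents

variable {L : ℕ} (p : SignedPerm (L + 1)) (ε : Bool) (s : Fin (L + 2))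

lemma desInd_ins_zero (hs : 2 ≤ (s : ℕ)) :
    (ins p ε s).desInd 0 = if ε then p.desInd 1 else p.desInd 0 := by
  rw [desInd_zero, desInd_zero, desInd_one, word_ins_of_le p ε s (j := 1) le_rfl (by omega),
    word_ins_of_le p ε s (j := 2) one_le_two hs]
  cases ε <;> simp

lemma desInd_ins_one (hs : 2 ≤ (s : ℕ)) :
    (ins p ε s).desInd 1 = if ε then p.desInd 0 else p.desInd 1 := by
  rw [desInd_zero, desInd_one, desInd_one,
    word_ins_of_le p ε s (j := 1) le_rfl (by omega), word_ins_of_le p ε s (j := 2) one_le_two hs]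
  cases ε <;> simp [lt_neg]

lemma desInd_ins_of_two_le {i : ℕ} (hi : 2 ≤ i) (his : i + 1 ≤ s) :
    (ins p ε s).desInd i = p.desInd i := by
  rw [desInd_of_pos _ (by omega), desInd_of_pos _ (by omega),
    word_ins_of_le p ε s (j := i) (by omega) (by omega),
    word_ins_of_le p ε s (j := i + 1) (by omega) his]
  simp [show i ≠ 0 by omega, show i ≠ 1 by omega]

lemma desInd_ins_succ_of_le {i : ℕ} (hi : 2 ≤ i) (hsi : s + 1 ≤ i) (hiL : i ≤ L) :
    (ins p ε s).desInd (i + 1) = p.desInd i := by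
  rw [desInd_of_pos _ (by omega), desInd_of_pos _ (by omega),
    word_ins_of_ge p ε s (j := i + 1) (by omega) (by omega),
    word_ins_of_ge p ε s (j := i + 1 + 1) (by omega) (by omega)]
  simp [show i ≠ 0 by omega, show i ≠ 1 by omega]

lemma sum_range_desInd_ins (hs : 2 ≤ (s : ℕ)) :
    ∑ i ∈ range s, (ins p ε s).desInd i = ∑ i ∈ range s, p.desInd i := by
  rw [← sum_range_add_sum_Ico _ hs, ← sum_range_add_sum_Ico _ hs]
  congr 1
  · simp only [sum_range_succ, sum_range_zero, desInd_ins_zero p ε s hs, desInd_ins_one p ε s hs]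
    cases ε <;> simp [add_comm]
  · exact sum_congr rfl fun i hi => desInd_ins_of_two_le p ε s (mem_Ico.1 hi).1 (mem_Ico.1 hi).2

lemma sum_Ico_desInd_ins {a : ℕ} (ha : 2 ≤ a) (hsa : s + 1 ≤ a) :
    ∑ i ∈ Ico (a + 1) (L + 2), (ins p ε s).desInd i = ∑ i ∈ Ico a (L + 1), p.desInd i := by
  rw [← sum_Ico_add']
  exact sum_congr rfl fun i hi => desInd_ins_succ_of_le p ε s (by grind) (by grind) (by grind)

lemma d_ins_add_desInd_of_two_le (hs : 2 ≤ (s : ℕ)) (hsL : (s : ℕ) ≤ L) :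
    (ins p ε s).d + p.desInd s = p.d + 1 := by
  have hloc : (ins p ε s).desInd s + (ins p ε s).desInd (s + 1) = 1 := by
    rw [desInd_of_pos _ (by omega), desInd_of_pos _ (by omega), word_ins_self,
      word_ins_of_le p ε s (j := s) (by omega) le_rfl,
      word_ins_of_ge p ε s (j := s + 1 + 1) (by omega) (by omega)]
    have := word_le p s; have := neg_le_word p s
    have := word_le p (s + 1); have := neg_le_word p (s + 1)
    cases ε <;> simp [show (s : ℕ) ≠ 1 by omega] <;> split_ifs <;> omega
  rw [d_eq_sum_desInd (ins p ε s), ← sum_range_add_sum_Ico _ (show s + 1 + 1 ≤ L + 2 by omega),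
    sum_range_succ, sum_range_succ, sum_range_desInd_ins p ε s hs,
    sum_Ico_desInd_ins p ε s (a := s + 1) (by omega) le_rfl, d_eq_sum_desInd p,
    ← sum_range_add_sum_Ico _ (show s + 1 ≤ L + 1 by omega), sum_range_succ]
  omega

lemma d_ins_last (hL : 1 ≤ L) : (ins p ε (Fin.last (L + 1))).d = p.d + if ε then 1 else 0 := by
  have hhead := sum_range_desInd_ins p ε (Fin.last _) (by simp only [Fin.val_last]; omega)
  have hloc : (ins p ε (Fin.last (L + 1))).desInd (L + 1) = if ε then 1 else 0 := by
    have hw := word_ins_self p ε (Fin.last _)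
    simp only [Fin.val_last] at hw
    rw [desInd_of_pos _ (by omega), word_ins_of_le p ε _ (j := L + 1) (by omega) (by simp), hw]
    have := word_le p (L + 1); have := neg_le_word p (L + 1)
    cases ε <;> simp <;> omega
  simp only [Fin.val_last] at hhead
  rw [d_eq_sum_desInd, sum_range_succ, hhead, hloc, ← d_eq_sum_desInd]

lemma d_ins_add_of_le_one (hL : 1 ≤ L) (hs : (s : ℕ) ≤ 1) :
    (ins p ε s).d + p.desInd 0 + p.desInd 1
      = (ins p ε s).desInd 0 + (ins p ε s).desInd 1 + (ins p ε s).desInd 2 + p.d := by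
  rw [d_eq_sum_desInd (ins p ε s), ← sum_range_add_sum_Ico _ (show 2 + 1 ≤ L + 2 by omega),
    sum_Ico_desInd_ins p ε s (a := 2) le_rfl (by omega), d_eq_sum_desInd p,
    ← sum_range_add_sum_Ico _ (show 2 ≤ L + 1 by omega)]
  simp only [sum_range_succ, sum_range_zero]
  omega

lemma d_ins_zero (hL : 1 ≤ L) :
    (ins p ε 0).d + (if ε then p.desInd 1 else p.desInd 0) = p.d + 1 := by
  have h := d_ins_add_of_le_one p ε 0 hL (by simp)
  have w1 : (ins p ε 0).word 1 = (if ε then -1 else 1) * (L + 2) := by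
    simpa using word_ins_self p ε 0
  have w2 : (ins p ε 0).word 2 = (if ε then -1 else 1) * p.word 1 := by
    simpa using word_ins_of_ge p ε 0 (j := 2) (by simp) (by omega)
  have w3 : (ins p ε 0).word 3 = p.word 2 := by
    simpa using word_ins_of_ge p ε 0 (j := 3) (by simp) (by omega)
  simp only [desInd_zero, desInd_one, desInd_of_pos _ two_pos, Nat.reduceAdd, w1, w2, w3] at h ⊢
  have := word_le p 1; have := neg_le_word p 1
  cases ε <;> simp at h ⊢ <;> split_ifs at h ⊢ <;> omega

lemma d_ins_one (hL : 1 ≤ L) :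
    (ins p ε 1).d + p.desInd 0 + p.desInd 1 = p.d + 1 + (if ε then 1 else 0) := by
  have h := d_ins_add_of_le_one p ε 1 hL (by simp)
  have w1 : (ins p ε 1).word 1 = (if ε then -1 else 1) * p.word 1 := by
    simpa using word_ins_of_le p ε 1 (j := 1) le_rfl (by simp)
  have w2 : (ins p ε 1).word 2 = (if ε then -1 else 1) * (L + 2) := by
    simpa using word_ins_self p ε 1
  have w3 : (ins p ε 1).word 3 = p.word 2 := by
    simpa using word_ins_of_ge p ε 1 (j := 3) (by simp) (by omega)
  simp only [desInd_zero, desInd_one, desInd_of_pos _ two_pos, Nat.reduceAdd, w1, w2, w3] at h ⊢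
  have := word_le p 1; have := neg_le_word p 1; have := word_le p 2; have := neg_le_word p 2
  cases ε <;> simp at h ⊢ <;> split_ifs at h ⊢ <;> omega

end InsertDescents

section Bijection

variable {L : ℕ}

lemma inD_ins_iff (p : SignedPerm (L + 1)) (ε : Bool) (s : Fin (L + 2)) :
    (ins p ε s).inD ↔ p.inD := by
  simp only [inD, card_filter, Fin.sum_univ_succAbove _ s, ins_snd_self, ins_snd_succAbove,
    Fin.sum_univ_succ (n := L), Function.update_self]
  simp only [ne_eq, Fin.succ_ne_zero, not_false_eq_true, Function.update_of_ne]
  cases ε <;> cases p.2 0 <;> simp [Nat.even_add_one, parity_simps]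

lemma ins_injective :
    Function.Injective
      fun q : SignedPerm (L + 1) × Bool × Fin (L + 2) => ins q.1 q.2.1 q.2.2 := by
  rintro ⟨p, ε, s⟩ ⟨p', ε', s'⟩ h
  simp only at h
  obtain rfl : s = s' := (ins p ε s).1.injective <| by
    rw [ins_fst_self, h, ins_fst_self]
  obtain rfl : ε = ε' := by simpa using congr_arg (fun τ => τ.2 s) h
  have hσ : p.1 = p'.1 := Equiv.ext fun i => Fin.castSucc_injective _ <| by
    simpa using congr_arg (fun τ => τ.1 (s.succAbove i)) h
  have hupd (i : Fin (L + 1)) := congr_arg (fun τ => τ.2 (s.succAbove i)) h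
  simp only [ins_snd_succAbove] at hupd
  have hsign : p.2 = p'.2 := funext fun i => by
    rcases eq_or_ne i 0 with rfl | hi
    · simpa using hupd 0
    · simpa [hi] using hupd i
  rw [Prod.ext hσ hsign]

lemma bijective_ins :
    Function.Bijective
      fun q : SignedPerm (L + 1) × Bool × Fin (L + 2) => ins q.1 q.2.1 q.2.2 := by
  refine (Fintype.bijective_iff_injective_and_card _).2 ⟨ins_injective, ?_⟩
  simp only [Fintype.card_prod, Fintype.card_perm, Fintype.card_fin, Fintype.card_bool,
    Fintype.card_fun, Nat.factorial_succ]
  ring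

end Bijection

section Fiber

variable {L : ℕ} (p : SignedPerm (L + 1))

lemma sum_ins_d {M : Type*} [AddCommMonoid M] (f : ℕ → M) (hL : 1 ≤ L) (ε : Bool) :
    ∑ s, f (ins p ε s).d = f (ins p ε 0).d + f (ins p ε 1).d
      + (#{j ∈ Ico 2 (L + 1) | j ∈ p.ddes} • f p.d
        + #{j ∈ Ico 2 (L + 1) | j ∉ p.ddes} • f (p.d + 1))
      + f (ins p ε (Fin.last (L + 1))).d := by
  rw [sum_fin_eq_sum_range, sum_range_succ, ← sum_range_add_sum_Ico _ (show 2 ≤ L + 1 by omega)]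
  simp only [sum_range_succ, sum_range_zero, zero_add, dif_pos (show L + 1 < L + 2 by omega),
    dif_pos (show 0 < L + 2 by omega), dif_pos (show 1 < L + 2 by omega)]
  rw [← sum_const, ← sum_const, ← sum_ite]
  congr 2
  refine sum_congr rfl fun j hj => ?_
  obtain ⟨hj2, hjL⟩ := mem_Ico.1 hj
  have h := d_ins_add_desInd_of_two_le p ε ⟨j, by omega⟩ hj2 (show j ≤ L by omega)
  rw [dif_pos (by omega)]
  rw [desInd_eq_ite_mem p hjL] at h
  split_ifs at h ⊢ <;> exact congrArg f (by omega)

lemma X_mul_sum_X_pow_d_ins (hL : 1 ≤ L) :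
    X * ∑ q : Bool × Fin (L + 2), (X : ℚ[X]) ^ (ins p q.1 q.2).d
      = (C (2 * ((L + 2 : ℕ) : ℚ) - 1) * X + 1) * (X * X ^ p.d)
        + 2 * X ^ 2 * (1 - X) * derivative (X ^ p.d)
        + (1 - X) * ((if p.type01 then X ^ p.d else 0)
          - X ^ 2 * (if p.typeGe2 then X ^ p.d else 0)) := by
  set k := #{j ∈ Ico 2 (L + 1) | j ∈ p.ddes}
  set m := #{j ∈ Ico 2 (L + 1) | j ∉ p.ddes}
  have hkm : L = k + m + 1 := by
    have := card_filter_add_card_filter_not (s := Ico 2 (L + 1)) (· ∈ p.ddes)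
    rw [Nat.card_Ico] at this
    omega
  have hd : p.d = k + p.desInd 0 + p.desInd 1 := d_eq_card_add_desInd p (by omega)
  have e0f := d_ins_zero p false hL
  have e0t := d_ins_zero p true hL
  have e1f := d_ins_one p false hL
  have e1t := d_ins_one p true hL
  have elf := d_ins_last p false hL
  have elt := d_ins_last p true hL
  simp only [Bool.false_eq_true, if_false, if_true] at e0f e0t e1f e1t elf elt
  rw [Fintype.sum_prod_type, Fintype.sum_bool, sum_ins_d p _ hL, sum_ins_d p _ hL,
    nsmul_eq_mul, nsmul_eq_mul,
    show (ins p false 0).d = k + 1 + p.desInd 1 by omega,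
    show (ins p true 0).d = k + 1 + p.desInd 0 by omega,
    show (ins p false 1).d = k + 1 by omega, show (ins p true 1).d = k + 2 by omega,
    elf, elt, show 2 * X ^ 2 * (1 - X) * derivative ((X : ℚ[X]) ^ p.d)
      = 2 * X * (1 - X) * (X * derivative (X ^ p.d)) by ring, X_mul_derivative_X_pow, hd,
    show ((L + 2 : ℕ) : ℚ) = k + m + 3 by rw [hkm]; push_cast; ring]
  rw [desInd_eq_ite_mem p (show 0 < L + 1 by omega), desInd_eq_ite_mem p (show 1 < L + 1 by omega)]
  by_cases h0 : 0 ∈ p.ddes <;> by_cases h1 : 1 ∈ p.ddes <;>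
    simp [type01, typeGe2, h0, h1, map_ofNat] <;> ring

end Fiber

lemma polyD_succ_succ_eq_sum_ins (L : ℕ) :
    polyD (L + 2) = ∑ p ∈ univ.filter (fun p : SignedPerm (L + 1) => p.inD),
      ∑ q : Bool × Fin (L + 2), (X : ℚ[X]) ^ (ins p q.1 q.2).d := by
  rw [polyD, sum_filter, sum_filter, ← (Equiv.ofBijective _ bijective_ins).sum_comp,
    Fintype.sum_prod_type]
  refine sum_congr rfl fun p _ => ?_
  simp only [Equiv.ofBijective_apply, inD_ins_iff]
  split_ifs <;> simp

end SignedPerm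

open Polynomial in
/-- **Corollary 4.6.** Recurrence for the type `D` Eulerian polynomials, cleared of
the denominator `t`:
`t·D_n(t) = [(2n-1)t+1]·t·D_{n-1}(t) + 2t²(1-t)·D_{n-1}'(t) + (1-t)·[D_{n-1}^{0,1}(t) - t²·D_{n-1}^{≥2}(t)]`. -/
theorem polyD_recurrence (n : ℕ) (hn : 3 ≤ n) :
    X * polyD n = (C (2 * (n : ℚ) - 1) * X + 1) * (X * polyD (n - 1))
      + 2 * X ^ 2 * (1 - X) * derivative (polyD (n - 1))
      + (1 - X) * (polyD01 (n - 1) - X ^ 2 * polyDGe2 (n - 1)) := by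
  obtain ⟨L, rfl⟩ : ∃ L, n = L + 2 := ⟨n - 2, by omega⟩
  rw [show L + 2 - 1 = L + 1 from rfl, SignedPerm.polyD_succ_succ_eq_sum_ins, mul_sum,
    sum_congr rfl fun p _ => SignedPerm.X_mul_sum_X_pow_d_ins p (by omega),
    polyD, polyD01, polyDGe2, ← filter_filter, ← filter_filter, sum_filter (s := univ.filter _),
    sum_filter (s := univ.filter _)]
  simp only [map_sum, mul_sum, ← sum_add_distrib, ← sum_sub_distrib]
end

section
/- For every n ≥ 2 and every k ≥ 0, the number of π ∈ D_n of type '1' with exactly k D-descents equals the number of π ∈ D_n of type '0,≥2' with exactly k D-descents; equivalently, D_n^1(t) = D_n^{0,≥2}(t) as polynomials. -/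
/-!
Negate both `π_1` and the letter `±1`. This is an involution, and when `|π_1| ≠ 1` it changes
the signs of two distinct letters, so it preserves `D_n`. In types '1' and '0,≥2' one has
`|π_1| > |π_2|`, and the type is then the sign of `π_1` (type '1' iff `π_1 > 0`), so the
involution exchanges the two types. Negating `±1` does not change its comparison with any other
letter, so descents at positions `≥ 2` are kept; in both types exactly one of the positions
`0, 1` is a descent, hence `d` is preserved as well.
-/

lemma even_card_filter_xor_iff {ι : Type*} [Fintype ι] (s t : ι → Bool)
    (ht : Even (Finset.univ.filter fun i => t i = true).card) :
    Even (Finset.univ.filter fun i => xor (s i) (t i) = true).card ↔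
      Even (Finset.univ.filter fun i => s i = true).card := by
  have hcount : (Finset.univ.filter fun i => xor (s i) (t i) = true).card
      + 2 * (Finset.univ.filter fun i => (s i && t i) = true).card
      = (Finset.univ.filter fun i => s i = true).card
        + (Finset.univ.filter fun i => t i = true).card := by
    simp only [Finset.card_filter, Finset.mul_sum, ← Finset.sum_add_distrib]
    refine Finset.sum_congr rfl fun i _ => ?_
    cases s i <;> cases t i <;> rfl
  rw [Nat.even_iff] at ht
  rw [Nat.even_iff, Nat.even_iff]
  omega

namespace SignedPerm

variable {n : ℕ}

/-- Positions `i = 0` and `σ i = 0` carry the letters `π_1` and `±1` (the same one if `π_1 = ±1`). -/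
def negFirstAndOne (p : SignedPerm n) : SignedPerm n :=
  (p.1, fun i => xor (p.2 i) (decide ((i : ℕ) = 0 ∨ (p.1 i : ℕ) = 0)))

lemma negFirstAndOne_involutive : Function.Involutive (negFirstAndOne (n := n)) := by
  intro p
  refine Prod.ext rfl (funext fun i => ?_)
  simp [negFirstAndOne]

lemma natAbs_word (p : SignedPerm n) {j : ℕ} (h1 : 1 ≤ j) (h2 : j ≤ n) :
    (p.word j).natAbs = (p.1 ⟨j - 1, by omega⟩ : ℕ) + 1 := by
  rw [word, dif_pos ⟨h1, h2⟩]
  cases p.2 ⟨j - 1, by omega⟩ <;> simp <;> omega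

lemma natAbs_word_ne (p : SignedPerm n) {i j : ℕ} (hi : 1 ≤ i) (hin : i ≤ n)
    (hj : 1 ≤ j) (hjn : j ≤ n) (hij : i ≠ j) :
    (p.word i).natAbs ≠ (p.word j).natAbs := by
  rw [natAbs_word p hi hin, natAbs_word p hj hjn, Ne, add_left_inj, Fin.val_inj,
    p.1.injective.eq_iff, Fin.mk.injEq]
  omega

lemma word_negFirstAndOne (p : SignedPerm n) {j : ℕ} (h1 : 1 ≤ j) (h2 : j ≤ n) :
    (negFirstAndOne p).word j =
      if j = 1 ∨ (p.word j).natAbs = 1 then -p.word j else p.word j := by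
  have hflip : j = 1 ∨ (p.word j).natAbs = 1 ↔ j - 1 = 0 ∨ (p.1 ⟨j - 1, by omega⟩ : ℕ) = 0 := by
    rw [natAbs_word p h1 h2]
    omega
  rw [if_congr hflip rfl rfl, word, word, dif_pos ⟨h1, h2⟩, dif_pos ⟨h1, h2⟩]
  simp only [negFirstAndOne]
  by_cases hc : j - 1 = 0 ∨ (p.1 ⟨j - 1, by omega⟩ : ℕ) = 0 <;>
    rcases Bool.eq_false_or_eq_true (p.2 ⟨j - 1, by omega⟩) with hb | hb <;> simp [hc, hb]

lemma word_one_negFirstAndOne (p : SignedPerm n) (hn : 1 ≤ n) :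
    (negFirstAndOne p).word 1 = -p.word 1 := by
  simp [word_negFirstAndOne p le_rfl hn]

lemma natAbs_word_negFirstAndOne (p : SignedPerm n) {j : ℕ} (h1 : 1 ≤ j) (h2 : j ≤ n) :
    ((negFirstAndOne p).word j).natAbs = (p.word j).natAbs := by
  rw [word_negFirstAndOne p h1 h2]
  split_ifs <;> simp

lemma mem_ddes_iff_word (p : SignedPerm n) {i : ℕ} (hi : 1 ≤ i) :
    i ∈ p.ddes ↔ i < n ∧ p.word (i + 1) < p.word i := by
  simp [ddes, entry, Nat.ne_zero_of_lt hi]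

lemma zero_mem_ddes_iff (p : SignedPerm n) (hn : 2 ≤ n) :
    0 ∈ p.ddes ↔ p.word 1 < -p.word 2 := by
  rw [ddes, Finset.mem_filter, Finset.mem_range, entry, entry, if_neg (by omega), if_pos rfl]
  exact and_iff_right (by omega)

lemma one_mem_ddes_iff (p : SignedPerm n) (hn : 2 ≤ n) :
    1 ∈ p.ddes ↔ p.word 2 < p.word 1 := by
  rw [mem_ddes_iff_word p le_rfl]
  exact and_iff_right (by omega)

lemma type1_iff (p : SignedPerm n) (hn : 2 ≤ n) :
    p.type1 ↔ ((p.word 2).natAbs : ℤ) < p.word 1 := by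
  have := natAbs_word_ne p le_rfl (by omega) (by omega) hn (by omega)
  rw [type1, zero_mem_ddes_iff p hn, one_mem_ddes_iff p hn]
  omega

lemma type0Ge2_iff (p : SignedPerm n) (hn : 2 ≤ n) :
    p.type0Ge2 ↔ p.word 1 < -((p.word 2).natAbs : ℤ) := by
  have := natAbs_word_ne p le_rfl (by omega) (by omega) hn (by omega)
  rw [type0Ge2, zero_mem_ddes_iff p hn, one_mem_ddes_iff p hn]
  omega

lemma type1_negFirstAndOne_iff (p : SignedPerm n) (hn : 2 ≤ n) :
    (negFirstAndOne p).type1 ↔ p.type0Ge2 := by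
  rw [type1_iff _ hn, type0Ge2_iff p hn, word_one_negFirstAndOne p (by omega),
    natAbs_word_negFirstAndOne p (by omega) hn]
  omega

lemma type0Ge2_negFirstAndOne_iff (p : SignedPerm n) (hn : 2 ≤ n) :
    (negFirstAndOne p).type0Ge2 ↔ p.type1 := by
  rw [← type1_negFirstAndOne_iff _ hn, negFirstAndOne_involutive p]

lemma one_lt_natAbs_word_one (p : SignedPerm n) (hn : 2 ≤ n) (h : p.type1 ∨ p.type0Ge2) :
    1 < (p.word 1).natAbs := by
  have := natAbs_word p (j := 2) (by omega) hn
  rw [type1_iff p hn, type0Ge2_iff p hn] at h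
  omega

lemma inD_negFirstAndOne_iff (p : SignedPerm n) (hn : 1 ≤ n) (h : (p.word 1).natAbs ≠ 1) :
    (negFirstAndOne p).inD ↔ p.inD := by
  refine even_card_filter_xor_iff p.2 _ ⟨1, ?_⟩
  have h0 : (p.1 ⟨0, by omega⟩ : ℕ) ≠ 0 := by
    rw [natAbs_word p le_rfl hn] at h
    simpa using h
  have hpair : (Finset.univ.filter fun i : Fin n =>
      decide ((i : ℕ) = 0 ∨ (p.1 i : ℕ) = 0) = true) = {⟨0, by omega⟩, p.1.symm ⟨0, by omega⟩} := by
    ext i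
    simp only [decide_eq_true_eq, Finset.mem_filter, Finset.mem_univ, true_and,
      Finset.mem_insert, Finset.mem_singleton, Equiv.eq_symm_apply, Fin.ext_iff]
  rw [hpair, Finset.card_pair]
  rintro hi
  exact h0 (by rw [hi, Equiv.apply_symm_apply])

lemma mem_ddes_negFirstAndOne_iff (p : SignedPerm n) {i : ℕ} (hi : 2 ≤ i) :
    i ∈ (negFirstAndOne p).ddes ↔ i ∈ p.ddes := by
  rw [mem_ddes_iff_word _ (by omega), mem_ddes_iff_word p (by omega)]
  refine and_congr_right fun hin => ?_
  have hne := natAbs_word_ne p (i := i) (j := i + 1) (by omega) (by omega) (by omega) hin (by omega)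
  rw [word_negFirstAndOne p (j := i) (by omega) (by omega),
    word_negFirstAndOne p (j := i + 1) (by omega) hin]
  have := natAbs_word p (j := i) (by omega) (by omega)
  have := natAbs_word p (j := i + 1) (by omega) hin
  split_ifs <;> omega

lemma d_eq_card_filter_add_one (p : SignedPerm n) (h : 0 ∈ p.ddes ↔ 1 ∉ p.ddes) :
    p.d = (p.ddes.filter (2 ≤ ·)).card + 1 := by
  have hlow : (p.ddes.filter fun i => ¬ 2 ≤ i).card = 1 := by
    refine Finset.card_eq_one.mpr ⟨if 0 ∈ p.ddes then 0 else 1, Finset.ext fun i => ?_⟩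
    simp only [Finset.mem_filter, Finset.mem_singleton, not_le]
    constructor
    · rintro ⟨hi, hlt⟩
      interval_cases i <;> split_ifs <;> tauto
    · rintro rfl
      split_ifs <;> exact ⟨by tauto, by norm_num⟩
  rw [d, ← Finset.card_filter_add_card_filter_not (s := p.ddes) (p := (2 ≤ ·)), hlow]

lemma d_negFirstAndOne (p : SignedPerm n) (hn : 2 ≤ n) (h : p.type1) :
    (negFirstAndOne p).d = p.d := by
  have h' := (type0Ge2_negFirstAndOne_iff p hn).mpr h
  rw [d_eq_card_filter_add_one p (by rw [type1] at h; tauto),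
    d_eq_card_filter_add_one _ (by rw [type0Ge2] at h'; tauto)]
  congr 2
  ext i
  simp only [Finset.mem_filter]
  exact and_congr_left fun hi => mem_ddes_negFirstAndOne_iff p hi

lemma inD_and_type0Ge2_negFirstAndOne_iff (p : SignedPerm n) (hn : 2 ≤ n) :
    (negFirstAndOne p).inD ∧ (negFirstAndOne p).type0Ge2 ↔ p.inD ∧ p.type1 := by
  rw [type0Ge2_negFirstAndOne_iff p hn]
  exact and_congr_left fun h =>
    inD_negFirstAndOne_iff p (by omega) (one_lt_natAbs_word_one p hn (.inl h)).ne'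

end SignedPerm

open SignedPerm in
/-- **Corollary 4.3 (i).** `D_{n,k}^1 = D_{n,k}^{0,≥2}` for all `k`, i.e.
`D_n^1(t) = D_n^{0,≥2}(t)`. -/
theorem subEuler1_eq_subEuler0Ge2 (n : ℕ) (hn : 2 ≤ n) :
    (∀ k : ℕ, subEuler1 n k = subEuler0Ge2 n k) ∧ polyD1 n = polyD0Ge2 n := by
  let e := (negFirstAndOne_involutive (n := n)).toPerm
  have he (p) : e p = negFirstAndOne p := rfl
  refine ⟨fun k => Finset.card_equiv e fun p => ?_, Finset.sum_equiv e (fun p => ?_) ?_⟩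
  · simp only [Finset.mem_filter, Finset.mem_univ, true_and, he, ← and_assoc,
      inD_and_type0Ge2_negFirstAndOne_iff p hn]
    exact and_congr_right fun ⟨_, h⟩ => by rw [d_negFirstAndOne p hn h]
  · simp [he, inD_and_type0Ge2_negFirstAndOne_iff p hn]
  · intro p hp
    rw [he, d_negFirstAndOne p hn (Finset.mem_filter.mp hp).2.2]
end

section
/- For every n ≥ 2 and every 0 ≤ k ≤ n, the number of π ∈ D_n of type '0,1' with exactly k D-descents equals the number of π ∈ D_n of type '≥2' with exactly n-k D-descents; equivalently, D_n^{0,1}(t) = t^n·D_n^{≥2}(t^{-1}) and D_n^{≥2}(t) = t^n·D_n^{0,1}(t^{-1}). -/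
/-!
Right multiplication by the longest element `w₀` of `D_n` is an involution of `D_n`. It negates
every letter, except `π_1` when `n` is odd; negating all letters complements the descent set,
and negating `π_1` swaps the descents at `0` and `1`. Hence it exchanges the types '0,1' and '≥2'
and sends `d(π)` to `n - d(π)`, which gives both the identity of counts and of polynomials.
-/

namespace SignedPerm

open Finset

variable {n : ℕ} (p : SignedPerm n)

def negAll : SignedPerm n := (p.1, fun i => !p.2 i)

def negFirst : SignedPerm n := (p.1, fun i => if i.val = 0 then !p.2 i else p.2 i)

/-- Right multiplication by the longest element `w₀` of `D_n`, which is `[-1, …, -n]` for even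
`n` and `[1, -2, …, -n]` for odd `n`. -/
def mulLongest (n : ℕ) (p : SignedPerm n) : SignedPerm n :=
  if Even n then p.negAll else p.negAll.negFirst

lemma mulLongest_involutive (n : ℕ) : Function.Involutive (mulLongest n) := by
  intro p
  by_cases hn : Even n <;>
  · refine Prod.ext (by simp [mulLongest, negAll, negFirst, hn]) (funext fun i => ?_)
    by_cases hi : i.val = 0 <;> simp [mulLongest, negAll, negFirst, hn, hi]

lemma word_negAll (j : ℕ) : p.negAll.word j = -p.word j := by
  unfold word negAll
  split_ifs <;> simp_all

lemma entry_negAll (j : ℕ) : p.negAll.entry j = -p.entry j := by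
  unfold entry
  split_ifs <;> simp [word_negAll]

lemma word_negFirst_one : p.negFirst.word 1 = -p.word 1 := by
  unfold word negFirst
  split_ifs <;> simp_all

lemma word_negFirst_of_ne_one {j : ℕ} (hj : j ≠ 1) : p.negFirst.word j = p.word j := by
  unfold word negFirst
  split_ifs <;> simp_all <;> omega

lemma entry_negFirst_one : p.negFirst.entry 1 = -p.entry 1 := by
  simp [entry, word_negFirst_one]

lemma entry_negFirst_of_ne_one {j : ℕ} (hj : j ≠ 1) : p.negFirst.entry j = p.entry j := by
  unfold entry
  split_ifs <;> simp [word_negFirst_of_ne_one, *]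

lemma natAbs_word_ne_s14 {j k : ℕ} (hj : 1 ≤ j ∧ j ≤ n) (hjk : j ≠ k) :
    (p.word j).natAbs ≠ (p.word k).natAbs := by
  unfold word
  rw [dif_pos hj]
  by_cases hk : 1 ≤ k ∧ k ≤ n
  · have hσ : p.1 ⟨j - 1, by omega⟩ ≠ p.1 ⟨k - 1, by omega⟩ :=
      p.1.injective.ne (by simp [Fin.ext_iff]; omega)
    rw [Ne, Fin.ext_iff] at hσ
    rw [dif_pos hk]
    split_ifs <;> simp <;> omega
  · rw [dif_neg hk]
    split_ifs <;> simp <;> omega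

lemma entry_succ_ne {i : ℕ} (hi : i < n) : p.entry (i + 1) ≠ p.entry i := by
  intro h
  rcases i with _ | i
  · simp only [entry, zero_add, one_ne_zero, if_false, if_true] at h
    exact p.natAbs_word_ne_s14 (j := 1) (k := 2) (by omega) (by omega) (by rw [h, Int.natAbs_neg])
  · simp only [entry, Nat.add_one_ne_zero, if_false] at h
    exact p.natAbs_word_ne_s14 (j := i + 1 + 1) (k := i + 1) (by omega) (by omega) (by rw [h])

lemma mem_ddes {i : ℕ} : i ∈ p.ddes ↔ i < n ∧ p.entry (i + 1) < p.entry i := by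
  rw [ddes, mem_filter, mem_range]

lemma ddes_subset_range : p.ddes ⊆ range n := filter_subset _ _

lemma d_le : p.d ≤ n := by
  simpa [d] using card_le_card p.ddes_subset_range

lemma ddes_negAll : p.negAll.ddes = range n \ p.ddes := by
  ext i
  simp only [mem_ddes, mem_sdiff, mem_range, entry_negAll, neg_lt_neg_iff]
  constructor
  · rintro ⟨hi, h⟩
    exact ⟨hi, fun ⟨_, h'⟩ => h.not_gt h'⟩
  · rintro ⟨hi, h⟩
    exact ⟨hi, lt_of_le_of_ne (not_lt.mp fun h' => h ⟨hi, h'⟩) (p.entry_succ_ne hi).symm⟩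

lemma d_negAll : p.negAll.d = n - p.d := by
  rw [d, ddes_negAll, card_sdiff_of_subset p.ddes_subset_range, card_range, d]

/-- Negating `π_1` realizes the diagram automorphism of `D_n` exchanging `s₀` and `s₁`. -/
lemma ddes_negFirst (hn : 2 ≤ n) : p.negFirst.ddes = p.ddes.map (Equiv.swap 0 1).toEmbedding := by
  ext i
  rw [mem_map_equiv, Equiv.symm_swap, mem_ddes, mem_ddes]
  rcases i with _ | _ | i
  · rw [Equiv.swap_apply_left, entry_negFirst_one, p.entry_negFirst_of_ne_one zero_ne_one]
    simp [entry]
    omega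
  · rw [Equiv.swap_apply_right, entry_negFirst_one, p.entry_negFirst_of_ne_one (by omega)]
    simp [entry]
    omega
  · rw [Equiv.swap_apply_of_ne_of_ne (by omega) (by omega),
      p.entry_negFirst_of_ne_one (by omega), p.entry_negFirst_of_ne_one (by omega)]

lemma d_negFirst (hn : 2 ≤ n) : p.negFirst.d = p.d := by
  rw [d, ddes_negFirst p hn, card_map, d]

lemma inD_negAll : p.negAll.inD ↔ (Even n ↔ p.inD) := by
  have hcompl : univ.filter (fun i => p.negAll.2 i = true) =
      univ \ univ.filter (fun i => p.2 i = true) := by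
    ext i; simp [negAll]
  rw [inD, inD, hcompl, card_sdiff_of_subset (filter_subset _ _), card_univ, Fintype.card_fin]
  exact Nat.even_sub ((card_filter_le _ _).trans_eq (by simp))

lemma inD_negFirst (hn : 0 < n) : p.negFirst.inD ↔ ¬ p.inD := by
  obtain ⟨m, rfl⟩ := Nat.exists_eq_add_one_of_ne_zero hn.ne'
  rw [inD, inD, card_filter, card_filter, Fin.sum_univ_succ, Fin.sum_univ_succ]
  cases h : p.2 0 <;> simp [negFirst, h, Fin.succ_ne_zero, Nat.even_add_one, parity_simps]

lemma inD_mulLongest : (mulLongest n p).inD ↔ p.inD := by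
  unfold mulLongest
  split_ifs with h
  · simp [inD_negAll, h]
  · have hn : 0 < n := Nat.pos_of_ne_zero (by rintro rfl; simp at h)
    rw [inD_negFirst _ hn, inD_negAll]
    tauto

lemma d_mulLongest (hn : 2 ≤ n) : (mulLongest n p).d = n - p.d := by
  unfold mulLongest
  split_ifs
  · exact p.d_negAll
  · rw [d_negFirst _ hn, d_negAll]

lemma typeGe2_mulLongest (hn : 2 ≤ n) : (mulLongest n p).typeGe2 ↔ p.type01 := by
  unfold mulLongest typeGe2 type01
  split_ifs
  · simp [ddes_negAll, show 0 < n by omega, show 1 < n by omega]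
  · simp [ddes_negFirst _ hn, ddes_negAll, mem_map_equiv, show 0 < n by omega, show 1 < n by omega]
    tauto

end SignedPerm

open SignedPerm Finset Polynomial

/-- **Corollary 4.3 (ii)–(iii).** `D_{n,k}^{0,1} = D_{n,n-k}^{≥2}` for `0 ≤ k ≤ n`, i.e.
`D_n^{0,1}(t) = t^n·D_n^{≥2}(t⁻¹)` and `D_n^{≥2}(t) = t^n·D_n^{0,1}(t⁻¹)`. -/
theorem subEuler01_reflect (n : ℕ) (hn : 2 ≤ n) :
    (∀ k : ℕ, k ≤ n → subEuler01 n k = subEulerGe2 n ((n : ℤ) - k)) ∧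
    (∀ t : ℚ, t ≠ 0 → (polyD01 n).eval t = t ^ n * (polyDGe2 n).eval t⁻¹) ∧
    (∀ t : ℚ, t ≠ 0 → (polyDGe2 n).eval t = t ^ n * (polyD01 n).eval t⁻¹) := by
  let w₀ := (mulLongest_involutive n).toPerm
  have hmem (p : SignedPerm n) : p.inD ∧ p.type01 ↔ (w₀ p).inD ∧ (w₀ p).typeGe2 := by
    simp [w₀, inD_mulLongest, typeGe2_mulLongest _ hn]
  have hpoly (t : ℚ) (ht : t ≠ 0) : (polyD01 n).eval t = t ^ n * (polyDGe2 n).eval t⁻¹ := by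
    simp only [polyD01, polyDGe2, eval_finsetSum, eval_pow, eval_X, mul_sum]
    refine sum_equiv w₀ (by simpa using hmem) fun p _ => ?_
    rw [show w₀ p = mulLongest n p from rfl, d_mulLongest _ hn, inv_pow, pow_sub₀ _ ht p.d_le]
    field_simp
  refine ⟨fun k hk => card_equiv w₀ fun p => ?_, hpoly, fun t ht => ?_⟩
  · have hd := p.d_le
    simp only [mem_filter, mem_univ, true_and, ← and_assoc, hmem]
    simp [w₀, d_mulLongest _ hn]
    omega
  · rw [hpoly t⁻¹ (inv_ne_zero ht), inv_inv, inv_pow, mul_inv_cancel_left₀ (pow_ne_zero _ ht)]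
end
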